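/- For every fixed ε > 0, the uncorrected instanton-side periodic Kramers prefactor converges as the interval length decreases to the critical value, to twice the corrected value at criticality: with L(m) = 4√(1+m)·K(m) and μ₀(m) = 1 − (2/(m+1))√(m² − m + 1), one has lim_{m → 0⁺} L(m) · (|μ₀(m)|/(2π)^{3/2}) · √( 2m(1−m)·sinh²(L(m)/√2) / ((1+m)^{5/2}·|K(m) − ((1+m)/(1−m))E(m)|) ) · ε^{−1/2} = 2·sinh(√2 π)/(√3 π) · ε^{−1/2}. -/

import Mathlib

open Real Filter Set

/-- The complete elliptic integral of the first kind,
`K(m) = ∫₀^{π/2} (1 − m sin²θ)^{−1/2} dθ`. -/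
noncomputable def ellipticK (m : ℝ) : ℝ :=
  ∫ θ in (0:ℝ)..(π / 2), (1 - m * Real.sin θ ^ 2) ^ (-(1 : ℝ) / 2)

/-- The complete elliptic integral of the second kind,
`E(m) = ∫₀^{π/2} √(1 − m sin²θ) dθ`. -/
noncomputable def ellipticE (m : ℝ) : ℝ :=
  ∫ θ in (0:ℝ)..(π / 2), Real.sqrt (1 - m * Real.sin θ ^ 2)

/-- The interval length of the periodic instanton with elliptic parameter `m`,
`L(m) = 4√(1+m)·K(m)`. -/
noncomputable def Lper (m : ℝ) : ℝ := 4 * Real.sqrt (1 + m) * ellipticK m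

open Topology

/-! Putting `(1 - m)K(m) - (1 + m)E(m)` under one integral shows that it equals `m·I(m)` with
`I(m) = ∫₀^{π/2} ((1 + m) sin²θ - 2)/√(1 - m sin²θ) dθ`, so the factor `m` in the radicand
cancels the degeneration of `|K - ((1 + m)/(1 - m))E|`. What remains is continuous at `m = 0`, where
`L = 2π`, `μ₀ = -1` and `I = -3π/4`, and its value there is the limit. -/

theorem ContinuousOn.continuousAt_intervalIntegral {E : Type*} [NormedAddCommGroup E]
    [NormedSpace ℝ E] {f : ℝ → ℝ → E} {U : Set ℝ} {x₀ : ℝ}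
    (hf : ContinuousOn (Function.uncurry f) (U ×ˢ univ)) (hU : U ∈ 𝓝 x₀) (a b : ℝ) :
    ContinuousAt (fun x => ∫ t in a..b, f x t) x₀ := by
  obtain ⟨l, u, hx₀, hlu_nhds, hluU⟩ := exists_Icc_mem_subset_of_mem_nhds hU
  have hlu : l ≤ u := hx₀.1.trans hx₀.2
  -- Clamping the parameter into `[l, u]` gives a jointly continuous integrand on all of `ℝ × ℝ`.
  have hg : Continuous (Function.uncurry fun x t => f (projIcc l u hlu x) t) :=
    hf.comp_continuous (f := fun p : ℝ × ℝ => ((projIcc l u hlu p.1 : ℝ), p.2))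
      (by fun_prop) fun p => ⟨hluU (projIcc l u hlu p.1).2, trivial⟩
  refine (intervalIntegral.continuous_parametric_intervalIntegral_of_continuous'
    (μ := MeasureTheory.volume) hg a b).continuousAt.congr ?_
  filter_upwards [hlu_nhds] with x hx
  simp only [projIcc_of_mem hlu hx]

lemma one_sub_mul_sin_sq_pos {m : ℝ} (hm : m < 1) (θ : ℝ) : 0 < 1 - m * sin θ ^ 2 := by
  have h0 := sq_nonneg (sin θ)
  have h1 := sin_sq_le_one θ
  rcases le_or_gt 0 m with hm0 | hm0 <;> nlinarith

noncomputable def ellipticKEDiff (m : ℝ) : ℝ :=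
  ∫ θ in (0:ℝ)..(π / 2), ((1 + m) * sin θ ^ 2 - 2) / √(1 - m * sin θ ^ 2)

lemma ellipticK_sub_mul_ellipticE {m : ℝ} (hm : m < 1) :
    ellipticK m - ((1 + m) / (1 - m)) * ellipticE m = m / (1 - m) * ellipticKEDiff m := by
  have hK : Continuous fun θ => (1 - m * sin θ ^ 2) ^ (-(1 : ℝ) / 2) :=
    (by fun_prop : Continuous fun θ => 1 - m * sin θ ^ 2).rpow_const
      fun θ => .inl (one_sub_mul_sin_sq_pos hm θ).ne'
  have hE : Continuous fun θ => (1 + m) / (1 - m) * √(1 - m * sin θ ^ 2) := by fun_prop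
  rw [ellipticK, ellipticE, ellipticKEDiff, ← intervalIntegral.integral_const_mul,
    ← intervalIntegral.integral_const_mul,
    ← intervalIntegral.integral_sub (hK.intervalIntegrable _ _) (hE.intervalIntegrable _ _)]
  refine intervalIntegral.integral_congr fun θ _ => ?_
  have hb := one_sub_mul_sin_sq_pos hm θ
  have hs : √(1 - m * sin θ ^ 2) ^ 2 = 1 - m * sin θ ^ 2 := sq_sqrt hb.le
  have hm1 : 1 - m ≠ 0 := by linarith
  rw [neg_div, rpow_neg hb.le, ← sqrt_eq_rpow]
  field_simp
  linear_combination (-(1 + m)) * hs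

lemma continuousAt_ellipticK {m : ℝ} (hm : m < 1) : ContinuousAt ellipticK m :=
  ContinuousOn.continuousAt_intervalIntegral
    (ContinuousOn.rpow_const (by fun_prop)
      fun p hp => .inl (one_sub_mul_sin_sq_pos (mem_prod.1 hp).1 p.2).ne')
    (Iio_mem_nhds hm) _ _

lemma continuousAt_ellipticKEDiff {m : ℝ} (hm : m < 1) : ContinuousAt ellipticKEDiff m :=
  ContinuousOn.continuousAt_intervalIntegral
    (f := fun m θ => ((1 + m) * sin θ ^ 2 - 2) / √(1 - m * sin θ ^ 2))
    (ContinuousOn.div (by fun_prop) (by fun_prop)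
      fun p hp => (sqrt_pos.2 (one_sub_mul_sin_sq_pos (mem_prod.1 hp).1 p.2)).ne')
    (Iio_mem_nhds hm) _ _

lemma continuousAt_Lper {m : ℝ} (hm : m < 1) : ContinuousAt Lper m :=
  (by fun_prop : Continuous fun m : ℝ => 4 * √(1 + m)).continuousAt.mul
    (continuousAt_ellipticK hm)

lemma ellipticK_zero : ellipticK 0 = π / 2 := by
  simp [ellipticK]

lemma Lper_zero : Lper 0 = 2 * π := by
  rw [Lper, ellipticK_zero, add_zero, sqrt_one]
  ring

lemma ellipticKEDiff_zero : ellipticKEDiff 0 = -(3 * π / 4) := by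
  calc ellipticKEDiff 0 = ∫ θ in (0:ℝ)..(π / 2), (sin θ ^ 2 - 2) :=
        intervalIntegral.integral_congr fun θ _ => by simp
    _ = -(3 * π / 4) := by
      have hsin : Continuous fun θ => sin θ ^ 2 := by fun_prop
      rw [intervalIntegral.integral_sub (hsin.intervalIntegrable _ _) intervalIntegrable_const,
        integral_sin_sq]
      simp
      ring

lemma prefactor_radicand_eq {m : ℝ} (h0 : 0 < m) (h1 : m < 1) (S P : ℝ) :
    2 * m * (1 - m) * S / (P * |ellipticK m - ((1 + m) / (1 - m)) * ellipticE m|) =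
      2 * (1 - m) ^ 2 * S / (P * |ellipticKEDiff m|) := by
  have hq : 0 < m / (1 - m) := div_pos h0 (by linarith)
  have hm1 : 1 - m ≠ 0 := by linarith
  rw [ellipticK_sub_mul_ellipticE h1, abs_mul, abs_of_pos hq, mul_left_comm P,
    ← mul_div_mul_left (2 * (1 - m) ^ 2 * S) _ hq.ne']
  congr 1
  field_simp

lemma critical_prefactor_value {s : ℝ} (hs : 0 ≤ s) :
    2 * π / (2 * π) ^ ((3 : ℝ) / 2) * √(2 * s ^ 2 / (3 * π / 4)) = 2 * s / (√3 * π) := by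
  have h2π : 0 < 2 * π := by positivity
  have h3 : ((2 * π) ^ ((3 : ℝ) / 2)) ^ 2 = (2 * π) ^ 3 := by
    rw [← rpow_mul_natCast h2π.le]
    norm_num
  rw [← sq_eq_sq₀ (by positivity) (by positivity), mul_pow, div_pow, div_pow,
    sq_sqrt (by positivity), h3, mul_pow √3, sq_sqrt zero_le_three]
  field_simp
  ring

theorem stmt_19_general (ε : ℝ) :
    Tendsto (fun m : ℝ =>
        Lper m * (|1 - (2 / (m + 1)) * Real.sqrt (m ^ 2 - m + 1)| / (2 * π) ^ ((3 : ℝ) / 2)) *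
          Real.sqrt (2 * m * (1 - m) * Real.sinh (Lper m / Real.sqrt 2) ^ 2 /
            ((1 + m) ^ ((5 : ℝ) / 2) *
              |ellipticK m - ((1 + m) / (1 - m)) * ellipticE m|)) *
          ε ^ (-(1 : ℝ) / 2))
      (nhdsWithin 0 (Ioi 0))
      (nhds (2 * Real.sinh (Real.sqrt 2 * π) / (Real.sqrt 3 * π) * ε ^ (-(1 : ℝ) / 2))) := by
  set g : ℝ → ℝ := fun m =>
    Lper m * (|1 - (2 / (m + 1)) * √(m ^ 2 - m + 1)| / (2 * π) ^ ((3 : ℝ) / 2)) *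
      √(2 * (1 - m) ^ 2 * sinh (Lper m / √2) ^ 2 /
        ((1 + m) ^ ((5 : ℝ) / 2) * |ellipticKEDiff m|)) * ε ^ (-(1 : ℝ) / 2)
  have hL := continuousAt_Lper (m := 0) one_pos
  have hD := continuousAt_ellipticKEDiff (m := 0) one_pos
  have hg : ContinuousAt g 0 := by
    fun_prop (disch := simp [ellipticKEDiff_zero, pi_ne_zero])
  have hg0 : g 0 = 2 * sinh (√2 * π) / (√3 * π) * ε ^ (-(1 : ℝ) / 2) := by
    have h2 : 2 * π / √2 = √2 * π := by
      field_simp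
      exact (sq_sqrt zero_le_two).symm
    have hv := critical_prefactor_value (sinh_nonneg_iff.2 (by positivity : 0 ≤ √2 * π))
    have hμ : |1 - 2 / (0 + 1) * √(0 ^ 2 - 0 + 1)| = 1 := by norm_num
    simp only [g]
    rw [hμ, Lper_zero, ellipticKEDiff_zero, h2, mul_one_div, ← hv]
    simp only [sub_zero, add_zero, one_pow, one_rpow, mul_one, one_mul, abs_neg,
      abs_of_pos (by positivity : 0 < 3 * π / 4)]
  rw [← hg0]
  refine (hg.tendsto.mono_left nhdsWithin_le_nhds).congr' ?_
  filter_upwards [Ioo_mem_nhdsGT one_pos] with m hm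
  simp only [g, prefactor_radicand_eq hm.1 hm.2]

/-- For every fixed `ε > 0`, the uncorrected instanton-side periodic
Kramers prefactor converges as the interval length decreases to the critical value, to
twice the corrected value at criticality: with `L(m) = 4√(1+m)·K(m)` and
`μ₀(m) = 1 − (2/(m+1))√(m² − m + 1)`, one has
`lim_{m → 0⁺} L(m) · (|μ₀(m)|/(2π)^{3/2}) ·
    √( 2m(1−m)·sinh²(L(m)/√2) / ((1+m)^{5/2}·|K(m) − ((1+m)/(1−m))E(m)|) ) · ε^{−1/2}
  = 2·sinh(√2 π)/(√3 π) · ε^{−1/2}`. -/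
theorem stmt_19 (ε : ℝ) (hε : 0 < ε) :
    Tendsto (fun m : ℝ =>
        Lper m * (|1 - (2 / (m + 1)) * Real.sqrt (m ^ 2 - m + 1)| / (2 * π) ^ ((3 : ℝ) / 2)) *
          Real.sqrt (2 * m * (1 - m) * Real.sinh (Lper m / Real.sqrt 2) ^ 2 /
            ((1 + m) ^ ((5 : ℝ) / 2) *
              |ellipticK m - ((1 + m) / (1 - m)) * ellipticE m|)) *
          ε ^ (-(1 : ℝ) / 2))
      (nhdsWithin 0 (Ioi 0))
      (nhds (2 * Real.sinh (Real.sqrt 2 * π) / (Real.sqrt 3 * π) * ε ^ (-(1 : ℝ) / 2))) :=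
  stmt_19_general ε
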